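/- If H is a tournament with the rainbow strong EH-property, then H has the strong EH-property. -/

import Mathlib

/-- A tournament on vertex set `Fin n`. -/
structure Tournament (n : ℕ) where
  adj : Fin n → Fin n → Prop
  irrefl : ∀ v, ¬ adj v v
  total : ∀ u v : Fin n, u ≠ v → (adj u v ↔ ¬ adj v u)

namespace Tournament

/-- `G` contains `H` as a subtournament. -/
def Contains {n m : ℕ} (G : Tournament n) (H : Tournament m) : Prop :=
  ∃ f : Fin m → Fin n, Function.Injective f ∧ ∀ u v, H.adj u v ↔ G.adj (f u) (f v)

/-- `G` has a pure pair of order at least `t`. -/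
def HasPurePair {n : ℕ} (G : Tournament n) (t : ℝ) : Prop :=
  ∃ A B : Finset (Fin n), Disjoint A B ∧ (∀ a ∈ A, ∀ b ∈ B, G.adj a b) ∧
    t ≤ A.card ∧ t ≤ B.card

/-- The strong Erdős–Hajnal property for a tournament. -/
def StrongEH {m : ℕ} (H : Tournament m) : Prop :=
  ∃ c : ℝ, 0 < c ∧ ∀ (n : ℕ) (G : Tournament n), ¬ G.Contains H → 1 < n →
    G.HasPurePair (c * n)

/-- The reverse tournament: all edges reversed. -/
def rev {n : ℕ} (G : Tournament n) : Tournament n where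
  adj i j := G.adj j i
  irrefl v := G.irrefl v
  total u v h := by have := G.total v u (Ne.symm h); tauto

/-- Isomorphism of tournaments. -/
def Iso {n m : ℕ} (G : Tournament n) (H : Tournament m) : Prop :=
  ∃ e : Fin n ≃ Fin m, ∀ u v, G.adj u v ↔ H.adj (e u) (e v)

/-- The backedge graph of `H` under the numbering `σ`: position `i` carries the vertex `σ i`,
and positions `i < j` are adjacent iff the vertex `σ i` is adjacent from `σ j` in `H`. -/
def backedge {m : ℕ} (H : Tournament m) (σ : Equiv.Perm (Fin m)) :
    SimpleGraph (Fin m) where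
  Adj i j := (i < j ∧ H.adj (σ j) (σ i)) ∨ (j < i ∧ H.adj (σ i) (σ j))
  symm := ⟨by intro i j h; tauto⟩
  loopless := ⟨by intro i h; rcases h with ⟨h, _⟩ | ⟨h, _⟩ <;> exact absurd h (lt_irrefl i)⟩

/-- The number of backedges of the numbering `σ` of `H`
(the number of edges of the backedge graph). -/
noncomputable def backCount {m : ℕ} (H : Tournament m) (σ : Equiv.Perm (Fin m)) : ℕ :=
  Nat.card {p : Fin m × Fin m | p.1 < p.2 ∧ H.adj (σ p.2) (σ p.1)}

end Tournament
/-- A blockade: a family of pairwise disjoint nonempty blocks. -/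
def IsBlockade {n k : ℕ} (B : Fin k → Finset (Fin n)) : Prop :=
  (∀ i, (B i).Nonempty) ∧ ∀ i j : Fin k, i ≠ j → Disjoint (B i) (B j)

/-- The width of a blockade: the minimum cardinality of a block. -/
noncomputable def blockadeWidth {n k : ℕ} (B : Fin k → Finset (Fin n)) : ℕ :=
  ⨅ i, (B i).card
/-- A rainbow copy of the tournament `H` in `G` with respect to the blockade `B`:
a copy of `H` whose vertices lie in pairwise different blocks. -/
def TRainbow {n m k : ℕ} (G : Tournament n) (H : Tournament m)
    (B : Fin k → Finset (Fin n)) : Prop :=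
  ∃ f : Fin m → Fin n, Function.Injective f ∧ (∀ u v, H.adj u v ↔ G.adj (f u) (f v)) ∧
    ∃ β : Fin m → Fin k, Function.Injective β ∧ ∀ u, f u ∈ B (β u)

/-- The rainbow strong EH-property for tournaments. -/
def Tournament.RSEH {m : ℕ} (H : Tournament m) : Prop :=
  ∃ c : ℝ, 0 < c ∧ c < 1 ∧
    ∀ (n k : ℕ) (G : Tournament n) (B : Fin k → Finset (Fin n)),
      IsBlockade B → 1 / c ≤ (k : ℝ) → ¬ TRainbow G H B →
      G.HasPurePair (c * blockadeWidth B)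

/-! Cut the vertices of an `H`-free `G` into `k = ⌈1/c⌉` intervals of equal size `⌊n/k⌋`; they form
a blockade with no rainbow copy of `H`, so the rainbow property yields a pure pair of order
`c⌊n/k⌋ ≥ cn/(2k)`. When `n < k`, a single edge is already a pure pair of the required order. -/

namespace Tournament

theorem HasPurePair.mono {n : ℕ} {G : Tournament n} {s t : ℝ} (h : G.HasPurePair s)
    (hts : t ≤ s) : G.HasPurePair t := by
  obtain ⟨A, B, hAB, hadj, hA, hB⟩ := h
  exact ⟨A, B, hAB, hadj, hts.trans hA, hts.trans hB⟩

theorem hasPurePair_one {n : ℕ} (G : Tournament n) (hn : 1 < n) : G.HasPurePair 1 := by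
  have : Nontrivial (Fin n) := Fin.nontrivial_iff_two_le.mpr hn
  obtain ⟨u, v, huv⟩ := exists_pair_ne (Fin n)
  wlog h : G.adj u v generalizing u v
  · exact this v u huv.symm (by have := G.total u v huv; tauto)
  exact ⟨{u}, {v}, by simpa using huv, by simpa using h, by simp, by simp⟩

end Tournament

theorem not_tRainbow_of_not_contains {n m k : ℕ} {G : Tournament n} {H : Tournament m}
    (hG : ¬ G.Contains H) (B : Fin k → Finset (Fin n)) : ¬ TRainbow G H B :=
  fun ⟨f, hf, hadj, _⟩ => hG ⟨f, hf, hadj⟩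

def intervalBlock {n k : ℕ} (q : ℕ) (hkq : k * q ≤ n) (i : Fin k) : Finset (Fin n) :=
  (Finset.Ico (i * q) ((i + 1) * q)).attachFin fun x hx => by
    have : ((i : ℕ) + 1) * q ≤ k * q := Nat.mul_le_mul_right q i.isLt
    rw [Finset.mem_Ico] at hx
    omega

theorem card_intervalBlock {n k q : ℕ} (hkq : k * q ≤ n) (i : Fin k) :
    (intervalBlock q hkq i).card = q := by
  simp [intervalBlock, add_mul]

theorem isBlockade_intervalBlock {n k q : ℕ} (hq : 0 < q) (hkq : k * q ≤ n) :
    IsBlockade (intervalBlock q hkq) := by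
  refine ⟨fun i => Finset.card_pos.mp (by rw [card_intervalBlock]; exact hq), ?_⟩
  intro i j hij
  rw [Finset.disjoint_left]
  intro x hxi hxj
  simp only [intervalBlock, Finset.mem_attachFin, Finset.mem_Ico] at hxi hxj
  rcases lt_or_gt_of_ne hij with hlt | hlt
  · have := Nat.mul_le_mul_right q (show (i : ℕ) + 1 ≤ j from hlt)
    omega
  · have := Nat.mul_le_mul_right q (show (j : ℕ) + 1 ≤ i from hlt)
    omega

theorem blockadeWidth_intervalBlock {n k q : ℕ} [NeZero k] (hkq : k * q ≤ n) :
    blockadeWidth (intervalBlock q hkq) = q := by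
  simp only [blockadeWidth, card_intervalBlock, ciInf_const]

theorem exists_isBlockade_blockadeWidth_eq_div {n k : ℕ} (hk : 0 < k) (hkn : k ≤ n) :
    ∃ B : Fin k → Finset (Fin n), IsBlockade B ∧ blockadeWidth B = n / k := by
  have : NeZero k := ⟨hk.ne'⟩
  have hkq : k * (n / k) ≤ n := Nat.mul_div_le n k
  exact ⟨intervalBlock (n / k) hkq,
    isBlockade_intervalBlock (Nat.div_pos hkn hk) hkq, blockadeWidth_intervalBlock hkq⟩

theorem div_two_mul_le_natDiv {n k : ℕ} (hk : 0 < k) (hkn : k ≤ n) :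
    (n : ℝ) / (2 * k) ≤ (n / k : ℕ) := by
  have hn : n < 2 * (k * (n / k)) := by
    have := Nat.lt_div_mul_add (a := n) hk
    have := Nat.le_mul_of_pos_right k (Nat.div_pos hkn hk)
    nlinarith
  rw [div_le_iff₀ (by positivity)]
  exact_mod_cast (by linarith : n ≤ (n / k) * (2 * k))

/-- A tournament with the rainbow strong EH-property has the strong EH-property. -/
theorem strongEH_of_RSEH {m : ℕ} (H : Tournament m) (h : H.RSEH) : H.StrongEH := by
  obtain ⟨c, hc0, hc1, hR⟩ := h
  set k : ℕ := ⌈1 / c⌉₊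
  have hk : 0 < k := Nat.ceil_pos.mpr (by positivity)
  refine ⟨c / (2 * k), by positivity, fun n G hG hn => ?_⟩
  rcases lt_or_ge n k with hnk | hkn
  · refine (G.hasPurePair_one hn).mono ?_
    have : (n : ℝ) ≤ k := by exact_mod_cast hnk.le
    rw [div_mul_eq_mul_div, div_le_one (by positivity)]
    nlinarith
  · obtain ⟨B, hB, hW⟩ := exists_isBlockade_blockadeWidth_eq_div hk hkn
    refine (hR n k G B hB (Nat.le_ceil _) (not_tRainbow_of_not_contains hG B)).mono ?_
    calc c / (2 * k) * n = c * (n / (2 * k)) := by ring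
      _ ≤ c * blockadeWidth B := by
        rw [hW]; exact mul_le_mul_of_nonneg_left (div_two_mul_le_natDiv hk hkn) hc0.le
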